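/- (Weight invariance in the extended language) In the language of arithmetic extended by countably many fresh constants c₀, c₁, c₂, …, let 𝒜' be the base consisting of the rules of 𝒜 (over closed terms of the extended language) together with the axiom rules ⊢ 0 = c_i for every i, and extend the weight function by w(c_i) = 0. Then: if ⊢_𝒜' t₁ = t₂ then w(t₁) = w(t₂); consequently S(0) = 0 is not derivable in 𝒜' and the base 𝒜' does not support ⊥. -/

import Mathlib

/-- Closed terms of the extended language of arithmetic: generated from 0 and
countably many fresh constants c₀, c₁, c₂, … by successor S, + and ·. -/
inductive Term : Type
  | zero : Term
  | const : ℕ → Term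
  | S : Term → Term
  | add : Term → Term → Term
  | mul : Term → Term → Term

/-- The numeral n̄ = Sⁿ(0). -/
def numeral : ℕ → Term
  | 0 => Term.zero
  | n + 1 => Term.S (numeral n)

/-- Atomic formulas: equations t = s between closed terms. -/
abbrev Atom : Type := Term × Term

/-- The extended weight function on closed terms, with w(c_i) = 0. -/
def w : Term → ℕ
  | .zero => 0
  | .const _ => 0
  | .S t => w t + 1
  | .add t s => w t + w s
  | .mul t s => w t * w s

/-- An atomic rule: finitely many atomic premises and an atomic conclusion. -/
structure Rule : Type where
  prems : List Atom
  concl : Atom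

/-- A base is a set of atomic rules. -/
abbrev Base : Type := Set Rule

/-- Derivability of an atom in a base, by composing the rules of the base. -/
inductive Deriv (B : Base) : Atom → Prop
  | step (r : Rule) (hr : r ∈ B) (hp : ∀ a ∈ r.prems, Deriv B a) : Deriv B r.concl

/-- The rules of the extended arithmetic base 𝒜′: the rules of 𝒜 over the
extended language together with the axiom rules ⊢ 0 = c_i. -/
inductive ARule' : Rule → Prop
  | eq1 (t : Term) : ARule' ⟨[], (t, t)⟩
  | eq2 (t s : Term) : ARule' ⟨[(t, s)], (s, t)⟩
  | eq3 (t s u : Term) : ARule' ⟨[(t, s), (s, u)], (t, u)⟩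
  | pa1 (t : Term) (a : Atom) : ARule' ⟨[(Term.S t, Term.zero)], a⟩
  | pa2 (t s : Term) : ARule' ⟨[(Term.S t, Term.S s)], (t, s)⟩
  | pa3 (t : Term) : ARule' ⟨[], (Term.add t Term.zero, t)⟩
  | pa4 (t s : Term) : ARule' ⟨[], (Term.add t (Term.S s), Term.S (Term.add t s))⟩
  | pa5 (t : Term) : ARule' ⟨[], (Term.mul t Term.zero, Term.zero)⟩
  | pa6 (t s : Term) : ARule' ⟨[], (Term.mul t (Term.S s), Term.add (Term.mul t s) t)⟩
  | czero (i : ℕ) : ARule' ⟨[], (Term.zero, Term.const i)⟩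

/-- The extended arithmetic base 𝒜′. -/
def ABase' : Base := { r | ARule' r }

/-!
The weight `w` evaluates a closed term in `ℕ` with every fresh constant read as `0`. Each rule of
`𝒜'` is sound for this evaluation: the equality rules and `PA2`–`PA6` hold in `ℕ`, the axioms
`0 = cᵢ` hold because `w cᵢ = 0`, and `PA1` is vacuous since `w (S t) = w t + 1` is never `0`.
Hence every derivable equation is weight-preserving, and `S 0 = 0` is not derivable.
-/

theorem Deriv.induction_of_rules {B : Base} {P : Atom → Prop}
    (hB : ∀ r ∈ B, (∀ a ∈ r.prems, P a) → P r.concl) {a : Atom} (h : Deriv B a) : P a := by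
  induction h with
  | step r hr _ ih => exact hB r hr ih

theorem ARule'.w_concl_eq {r : Rule} (hr : ARule' r) (hprems : ∀ a ∈ r.prems, w a.1 = w a.2) :
    w r.concl.1 = w r.concl.2 := by
  cases hr with
  | eq1 t => rfl
  | eq2 t s => exact (hprems (t, s) (by simp)).symm
  | eq3 t s u => exact (hprems (t, s) (by simp)).trans (hprems (s, u) (by simp))
  | pa1 t a => exact absurd (hprems (Term.S t, Term.zero) (by simp)) (Nat.succ_ne_zero _)
  | pa2 t s => exact Nat.succ.inj (hprems (Term.S t, Term.S s) (by simp))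
  | pa3 t => rfl
  | pa4 t s => exact (Nat.add_assoc _ _ _).symm
  | pa5 t => rfl
  | pa6 t s => exact Nat.mul_succ _ _
  | czero i => rfl

theorem w_eq_of_deriv {t₁ t₂ : Term} (h : Deriv ABase' (t₁, t₂)) : w t₁ = w t₂ :=
  h.induction_of_rules (P := fun a => w a.1 = w a.2) fun _ hr => ARule'.w_concl_eq hr

/-- weight invariance in the extended language: if ⊢_𝒜′ t₁ = t₂ then
w(t₁) = w(t₂); consequently S(0) = 0 is not derivable in 𝒜′ and 𝒜′ does not
support ⊥ (i.e. not every atom is derivable). -/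
theorem ext_weight_invariant :
    (∀ t₁ t₂ : Term, Deriv ABase' (t₁, t₂) → w t₁ = w t₂) ∧
    ¬ Deriv ABase' (Term.S Term.zero, Term.zero) ∧
    ¬ (∀ a : Atom, Deriv ABase' a) := by
  have not_deriv_one_eq_zero : ¬ Deriv ABase' (Term.S Term.zero, Term.zero) :=
    fun h => one_ne_zero (w_eq_of_deriv h)
  exact ⟨fun _ _ => w_eq_of_deriv, not_deriv_one_eq_zero, fun h => not_deriv_one_eq_zero (h _)⟩
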